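/- arXiv:2402.01137 — 7 statements merged into one kernel-verified Lean document; each statement's English description precedes it below -/
import Mathlib

section
/- Define α_n = n(n+1)/2 − 1 for integers n ≥ 1, and define h : ℝ → ℝ by h(x) = (α_n − x)/2 for x ∈ [α_n, α_n + n), h(x) = n(x − α_{n+1})/2 for x ∈ [α_n + n, α_{n+1}) (for each n ≥ 1), and h(x) = −h(−x) for x ≤ 0. Then (i) |h(x)| ≤ |x| for every x ∈ ℝ, and (ii) h satisfies the one-sided slope bound h(y) − h(x) ≥ −(y − x)/2 for all real x ≤ y. -/
theorem stmt2 (α : ℕ → ℝ) (hα : ∀ n : ℕ, α n = n * (n + 1) / 2 - 1)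
    (h : ℝ → ℝ)
    (h1 : ∀ n : ℕ, 1 ≤ n → ∀ x : ℝ, α n ≤ x → x < α n + n → h x = (α n - x) / 2)
    (h2 : ∀ n : ℕ, 1 ≤ n → ∀ x : ℝ, α n + n ≤ x → x < α (n + 1) →
      h x = n * (x - α (n + 1)) / 2)
    (h3 : ∀ x : ℝ, x ≤ 0 → h x = -h (-x)) :
    (∀ x : ℝ, |h x| ≤ |x|) ∧ (∀ x y : ℝ, x ≤ y → -(y - x) / 2 ≤ h y - h x) := by
  have hstep : ∀ n : ℕ, α (n + 1) = α n + (n + 1) := by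
    intro n; rw [hα, hα]; push_cast; ring
  have hα_nonneg : ∀ n : ℕ, 1 ≤ n → 0 ≤ α n := by
    intro n hn
    have hn' : (1 : ℝ) ≤ n := by exact_mod_cast hn
    rw [hα]; nlinarith
  have hα_mono : ∀ m n : ℕ, m ≤ n → α m ≤ α n := by
    intro m n hmn
    have hmn' : (m : ℝ) ≤ n := by exact_mod_cast hmn
    have hm0 : (0 : ℝ) ≤ m := by positivity
    rw [hα, hα]; nlinarith
  -- every nonnegative x lies in some block [α n, α (n+1))
  have hblock : ∀ x : ℝ, 0 ≤ x → ∃ n : ℕ, 1 ≤ n ∧ α n ≤ x ∧ x < α (n + 1) := by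
    intro x hx
    have hex : ∃ k : ℕ, x < α (k + 1) := by
      refine ⟨⌊x⌋₊ + 1, ?_⟩
      have h1' : x < (⌊x⌋₊ : ℝ) + 1 := Nat.lt_floor_add_one x
      rw [hα]
      have hm : ((⌊x⌋₊ + 1 + 1 : ℕ) : ℝ) = (⌊x⌋₊ : ℝ) + 2 := by push_cast; ring
      rw [hm]
      have h0 : (0 : ℝ) ≤ (⌊x⌋₊ : ℝ) := by positivity
      nlinarith
    classical
    have hn1 := Nat.find_spec hex
    have hne : Nat.find hex ≠ 0 := by
      intro h0
      rw [h0] at hn1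
      have hα1 : α 1 = 0 := by rw [hα]; norm_num
      rw [hα1] at hn1; linarith
    obtain ⟨m, hm⟩ := Nat.exists_eq_succ_of_ne_zero hne
    have hmin := Nat.find_min hex (by omega : m < Nat.find hex)
    push_neg at hmin
    refine ⟨m + 1, by omega, ?_, ?_⟩
    · exact hmin
    · rw [show m + 1 + 1 = Nat.find hex + 1 by omega]; exact hn1
  -- bounds on g x := h x + x/2 within a block, plus |h x| ≤ x
  have hbounds : ∀ n : ℕ, 1 ≤ n → ∀ x : ℝ, α n ≤ x → x < α (n + 1) →
      α n / 2 ≤ h x + x / 2 ∧ h x + x / 2 ≤ α (n + 1) / 2 ∧ |h x| ≤ x := by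
    intro n hn x hax hxb
    have hb := hstep n
    have hn' : (1 : ℝ) ≤ n := by exact_mod_cast hn
    have ha0 : 0 ≤ α n := hα_nonneg n hn
    rcases lt_or_ge x (α n + n) with hc | hc
    · rw [h1 n hn x hax hc]
      refine ⟨by linarith, by linarith, ?_⟩
      rw [abs_of_nonpos (by linarith)]
      linarith
    · rw [h2 n hn x hc hxb]
      have key : (n : ℝ) * (α (n + 1) - x) ≤ (n : ℝ) * 1 :=
        mul_le_mul_of_nonneg_left (by linarith) (by positivity)
      have key2 : (n : ℝ) * (α n + n) ≤ (n : ℝ) * x :=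
        mul_le_mul_of_nonneg_left hc (by positivity)
      refine ⟨by nlinarith, ?_, ?_⟩
      · have : (n : ℝ) * (x - α (n + 1)) ≤ 0 := by nlinarith
        linarith
      · have hneg : (n : ℝ) * (x - α (n + 1)) / 2 ≤ 0 := by nlinarith
        rw [abs_of_nonpos hneg]
        nlinarith
  have gnonneg : ∀ x : ℝ, 0 ≤ x → 0 ≤ h x + x / 2 := by
    intro x hx
    obtain ⟨n, hn, hax, hxb⟩ := hblock x hx
    have := (hbounds n hn x hax hxb).1
    have := hα_nonneg n hn
    linarith
  have gmono : ∀ x y : ℝ, 0 ≤ x → x ≤ y → h x + x / 2 ≤ h y + y / 2 := by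
    intro x y hx hxy
    obtain ⟨n, hn, hax, hxb⟩ := hblock x hx
    obtain ⟨m, hm, hay, hyb⟩ := hblock y (le_trans hx hxy)
    have hnm : n ≤ m := by
      by_contra hlt
      push_neg at hlt
      have : α (m + 1) ≤ α n := hα_mono (m + 1) n (by omega)
      linarith
    rcases eq_or_lt_of_le hnm with rfl | hlt
    · -- same block
      have hb := hstep n
      have hn0 : (0 : ℝ) ≤ n := by positivity
      rcases lt_or_ge x (α n + n) with hcx | hcx
      · rcases lt_or_ge y (α n + n) with hcy | hcy
        · rw [h1 n hn x hax hcx, h1 n hn y hay hcy]; linarith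
        · rw [h1 n hn x hax hcx, h2 n hn y hcy hyb]
          have key : (n : ℝ) * (α n + n) ≤ (n : ℝ) * y :=
            mul_le_mul_of_nonneg_left hcy hn0
          nlinarith
      · rcases lt_or_ge y (α n + n) with hcy | hcy
        · exfalso; linarith
        · rw [h2 n hn x hcx hxb, h2 n hn y hcy hyb]
          have key : (n : ℝ) * x ≤ (n : ℝ) * y :=
            mul_le_mul_of_nonneg_left hxy hn0
          nlinarith
    · -- different blocks
      have hub := (hbounds n hn x hax hxb).2.1
      have hlb := (hbounds m hm y hay hyb).1
      have hmid : α (n + 1) ≤ α m := hα_mono (n + 1) m (by omega)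
      linarith
  constructor
  · intro x
    rcases le_or_gt 0 x with hx | hx
    · obtain ⟨n, hn, hax, hxb⟩ := hblock x hx
      have := (hbounds n hn x hax hxb).2.2
      rw [abs_of_nonneg hx]
      exact this
    · rw [h3 x hx.le, abs_neg]
      have hx' : 0 ≤ -x := by linarith
      obtain ⟨n, hn, hax, hxb⟩ := hblock (-x) hx'
      have := (hbounds n hn (-x) hax hxb).2.2
      rw [abs_of_neg hx]
      exact this
  · intro x y hxy
    suffices hgs : h x + x / 2 ≤ h y + y / 2 by linarith
    rcases le_or_gt 0 x with hx | hx
    · exact gmono x y hx hxy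
    · rcases le_or_gt 0 y with hy | hy
      · have hox : h x = -h (-x) := h3 x hx.le
        have h1' : 0 ≤ h (-x) + (-x) / 2 := gnonneg (-x) (by linarith)
        have h2' : 0 ≤ h y + y / 2 := gnonneg y hy
        linarith
      · have hox : h x = -h (-x) := h3 x hx.le
        have hoy : h y = -h (-y) := h3 y hy.le
        have := gmono (-y) (-x) (by linarith) (by linarith)
        linarith
end

section
/- Define α_n = n(n+1)/2 − 1 for integers n ≥ 1, and define h : ℝ → ℝ by h(x) = (α_n − x)/2 for x ∈ [α_n, α_n + n), h(x) = n(x − α_{n+1})/2 for x ∈ [α_n + n, α_{n+1}) (for each n ≥ 1), and h(x) = −h(−x) for x ≤ 0. Then h is not Lipschitz continuous: for every constant K ≥ 0 there exist x, y ∈ ℝ with |h(x) − h(y)| > K·|x − y|. -/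
theorem stmt3 (α : ℕ → ℝ) (hα : ∀ n : ℕ, α n = n * (n + 1) / 2 - 1)
    (h : ℝ → ℝ)
    (h1 : ∀ n : ℕ, 1 ≤ n → ∀ x : ℝ, α n ≤ x → x < α n + n → h x = (α n - x) / 2)
    (h2 : ∀ n : ℕ, 1 ≤ n → ∀ x : ℝ, α n + n ≤ x → x < α (n + 1) →
      h x = n * (x - α (n + 1)) / 2)
    (h3 : ∀ x : ℝ, x ≤ 0 → h x = -h (-x)) :
    ∀ K : ℝ, 0 ≤ K → ∃ x y : ℝ, K * |x - y| < |h x - h y| := by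
  intro K hK
  set n : ℕ := Nat.ceil (2 * K) + 1 with hn
  have hn1 : 1 ≤ n := Nat.le_add_left 1 _
  have hnK : 2 * K < (n : ℝ) := by
    have := Nat.le_ceil (2 * K)
    push_cast [hn]
    linarith
  have hsucc : α (n + 1) = α n + n + 1 := by
    rw [hα, hα]; push_cast; ring
  set x : ℝ := α n + n with hx
  set y : ℝ := α n + n + 1 / 2 with hy
  have hhx : h x = n * (x - α (n + 1)) / 2 := by
    apply h2 n hn1 x le_rfl
    rw [hsucc]; linarith
  have hhy : h y = n * (y - α (n + 1)) / 2 := by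
    apply h2 n hn1 y (by rw [hy]; linarith)
    rw [hsucc, hy]; linarith
  refine ⟨x, y, ?_⟩
  have hxy : x - y = -(1 / 2) := by rw [hx, hy]; ring
  have hhxy : h x - h y = -(n / 4) := by
    rw [hhx, hhy, hsucc, hx, hy]; ring
  rw [hxy, hhxy, abs_neg, abs_neg, abs_of_pos (by norm_num : (0:ℝ) < 1/2),
    abs_of_pos]
  · linarith
  · have : (0:ℝ) < n := by positivity
    linarith
end

section
/- Let H be a real inner product space, Λ : H → H a continuous linear self-adjoint operator with ⟨Λx, x⟩ ≥ 0 for all x, η ∈ ℝ, a₂ ∈ ℝ with η + a₂ ≥ 0, and F : H → H satisfying ⟨a − b, F(a) − F(b)⟩ ≥ a₂‖a − b‖² for all a, b ∈ H. Suppose u, v, ũ, ṽ : ℝ → H are differentiable and satisfy, for all t ≥ 0, u'(t) = v(t), v'(t) = −Λu(t) − η v(t) − F(v(t)) + w(t) and ũ'(t) = ṽ(t), ṽ'(t) = −Λũ(t) − η ṽ(t) − F(ṽ(t)) + w(t) with the same forcing w : ℝ → H. Then for every t ≥ 0, ⟨Λ(u(t) − ũ(t)), u(t) − ũ(t)⟩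 + ‖v(t) − ṽ(t)‖² ≤ ⟨Λ(u(0) − ũ(0)), u(0) − ũ(0)⟩ + ‖v(0) − ṽ(0)‖². -/
/-!
Since both solutions are driven by the same forcing `w`, the forcing cancels in the difference
`(x, y) = (u₁ - u₂, v₁ - v₂)`, which solves `x' = y`, `y' = -Λ x - g` with
`g = η • y + (F v₁ - F v₂)`. The symmetry of `Λ` makes the `Λ`-terms cancel in the derivative of the
energy `⟪Λ x, x⟫ + ‖y‖²`, which is therefore `-2 ⟪y, g⟫ ≤ -2 (η + a₂) ‖y‖² ≤ 0`.
-/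

open scoped RealInnerProductSpace

section

variable {H : Type*} [NormedAddCommGroup H] [InnerProductSpace ℝ H]

theorem HasDerivAt.inner_apply_self {Λ : H →L[ℝ] H} (hΛ : (Λ : H →ₗ[ℝ] H).IsSymmetric)
    {x : ℝ → H} {x' : H} {s : ℝ} (hx : HasDerivAt x x' s) :
    HasDerivAt (fun s => ⟪Λ (x s), x s⟫) (2 * ⟪Λ (x s), x'⟫) s := by
  have hΛx : HasDerivAt (fun s => Λ (x s)) (Λ x') s := Λ.hasFDerivAt.comp_hasDerivAt s hx
  refine (hΛx.inner ℝ hx).congr_deriv ?_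
  have hsym : ⟪Λ x', x s⟫ = ⟪x', Λ (x s)⟫ := hΛ x' (x s)
  rw [hsym, real_inner_comm x', two_mul]

theorem antitoneOn_energy {Λ : H →L[ℝ] H} (hΛ : (Λ : H →ₗ[ℝ] H).IsSymmetric) {x y g : ℝ → H}
    (hx : ∀ s, 0 ≤ s → HasDerivAt x (y s) s)
    (hy : ∀ s, 0 ≤ s → HasDerivAt y (-Λ (x s) - g s) s)
    (hg : ∀ s, 0 ≤ s → 0 ≤ ⟪y s, g s⟫) :
    AntitoneOn (fun s => ⟪Λ (x s), x s⟫ + ‖y s‖ ^ 2) (Set.Ici 0) := by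
  have hE : ∀ s, 0 ≤ s → HasDerivAt (fun s => ⟪Λ (x s), x s⟫ + ‖y s‖ ^ 2)
      (-(2 * ⟪y s, g s⟫)) s := by
    intro s hs
    refine (((hx s hs).inner_apply_self hΛ).add (hy s hs).norm_sq).congr_deriv ?_
    rw [inner_sub_right, inner_neg_right, real_inner_comm (Λ (x s))]
    ring
  refine antitoneOn_of_hasDerivWithinAt_nonpos (f' := fun s => -(2 * ⟪y s, g s⟫)) (convex_Ici 0)
    (fun s hs => (hE s hs).continuousAt.continuousWithinAt) (fun s hs => ?_) (fun s hs => ?_)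
  · rw [interior_Ici] at hs
    exact (hE s hs.le).hasDerivWithinAt
  · rw [interior_Ici] at hs
    linarith [hg s hs.le]

theorem inner_sub_smul_add_sub_nonneg {F : H → H} {η a₂ : ℝ} (hηa : 0 ≤ η + a₂)
    (hF : ∀ a b : H, a₂ * ‖a - b‖ ^ 2 ≤ ⟪a - b, F a - F b⟫) (a b : H) :
    0 ≤ ⟪a - b, η • (a - b) + (F a - F b)⟫ := by
  rw [inner_add_right, real_inner_smul_right, real_inner_self_eq_norm_sq]
  linarith [hF a b, mul_nonneg hηa (sq_nonneg ‖a - b‖)]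

end

theorem stmt5_general {H : Type*} [NormedAddCommGroup H] [InnerProductSpace ℝ H]
    (Λ : H →L[ℝ] H) (hΛsym : ∀ x y : H, ⟪Λ x, y⟫ = ⟪x, Λ y⟫)
    (η a₂ : ℝ) (hηa : 0 ≤ η + a₂)
    (F : H → H) (hF : ∀ a b : H, a₂ * ‖a - b‖ ^ 2 ≤ ⟪a - b, F a - F b⟫)
    (w u₁ v₁ u₂ v₂ : ℝ → H)
    (hu₁ : Differentiable ℝ u₁) (hv₁ : Differentiable ℝ v₁)
    (hu₂ : Differentiable ℝ u₂) (hv₂ : Differentiable ℝ v₂)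
    (hu₁' : ∀ t : ℝ, 0 ≤ t → deriv u₁ t = v₁ t)
    (hv₁' : ∀ t : ℝ, 0 ≤ t → deriv v₁ t = -Λ (u₁ t) - η • v₁ t - F (v₁ t) + w t)
    (hu₂' : ∀ t : ℝ, 0 ≤ t → deriv u₂ t = v₂ t)
    (hv₂' : ∀ t : ℝ, 0 ≤ t → deriv v₂ t = -Λ (u₂ t) - η • v₂ t - F (v₂ t) + w t)
    (t : ℝ) (ht : 0 ≤ t) :
    ⟪Λ (u₁ t - u₂ t), u₁ t - u₂ t⟫ + ‖v₁ t - v₂ t‖ ^ 2 ≤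
      ⟪Λ (u₁ 0 - u₂ 0), u₁ 0 - u₂ 0⟫ + ‖v₁ 0 - v₂ 0‖ ^ 2 := by
  have hx : ∀ s, 0 ≤ s → HasDerivAt (fun s => u₁ s - u₂ s) (v₁ s - v₂ s) s := fun s hs =>
    (hu₁' s hs ▸ (hu₁ s).hasDerivAt).fun_sub (hu₂' s hs ▸ (hu₂ s).hasDerivAt)
  have hy : ∀ s, 0 ≤ s → HasDerivAt (fun s => v₁ s - v₂ s)
      (-Λ (u₁ s - u₂ s) - (η • (v₁ s - v₂ s) + (F (v₁ s) - F (v₂ s)))) s := by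
    intro s hs
    refine ((hv₁' s hs ▸ (hv₁ s).hasDerivAt).fun_sub
      (hv₂' s hs ▸ (hv₂ s).hasDerivAt)).congr_deriv ?_
    rw [map_sub, smul_sub]
    abel
  exact antitoneOn_energy hΛsym hx hy
    (fun s _ => inner_sub_smul_add_sub_nonneg hηa hF (v₁ s) (v₂ s)) Set.self_mem_Ici ht ht

theorem stmt5 {H : Type*} [NormedAddCommGroup H] [InnerProductSpace ℝ H]
    (Λ : H →L[ℝ] H) (hΛsym : ∀ x y : H, ⟪Λ x, y⟫ = ⟪x, Λ y⟫)
    (hΛpos : ∀ x : H, 0 ≤ ⟪Λ x, x⟫)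
    (η a₂ : ℝ) (hηa : 0 ≤ η + a₂)
    (F : H → H) (hF : ∀ a b : H, a₂ * ‖a - b‖ ^ 2 ≤ ⟪a - b, F a - F b⟫)
    (w u₁ v₁ u₂ v₂ : ℝ → H)
    (hu₁ : Differentiable ℝ u₁) (hv₁ : Differentiable ℝ v₁)
    (hu₂ : Differentiable ℝ u₂) (hv₂ : Differentiable ℝ v₂)
    (hu₁' : ∀ t : ℝ, 0 ≤ t → deriv u₁ t = v₁ t)
    (hv₁' : ∀ t : ℝ, 0 ≤ t → deriv v₁ t = -Λ (u₁ t) - η • v₁ t - F (v₁ t) + w t)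
    (hu₂' : ∀ t : ℝ, 0 ≤ t → deriv u₂ t = v₂ t)
    (hv₂' : ∀ t : ℝ, 0 ≤ t → deriv v₂ t = -Λ (u₂ t) - η • v₂ t - F (v₂ t) + w t)
    (t : ℝ) (ht : 0 ≤ t) :
    ⟪Λ (u₁ t - u₂ t), u₁ t - u₂ t⟫ + ‖v₁ t - v₂ t‖ ^ 2 ≤
      ⟪Λ (u₁ 0 - u₂ 0), u₁ 0 - u₂ 0⟫ + ‖v₁ 0 - v₂ 0‖ ^ 2 :=
  stmt5_general Λ hΛsym η a₂ hηa F hF w u₁ v₁ u₂ v₂ hu₁ hv₁ hu₂ hv₂ hu₁' hv₁' hu₂' hv₂' t ht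
end

section
/- Let H be a real inner product space, λ₁ > 0, Λ : H → H a continuous linear self-adjoint operator with ⟨Λx, x⟩ ≥ λ₁‖x‖² for all x, η > 0, a₂ ∈ ℝ with η + a₂ > 0, L ≥ 0, and F : H → H satisfying (i) ⟨a − b, F(a) − F(b)⟩ ≥ a₂‖a − b‖² and (ii) |⟨x, F(a) − F(b)⟩| ≤ L·√(⟨Λx, x⟩)·‖a − b‖ for all x, a, b ∈ H. Then there exist ε₀ > 0 and C ≥ 1, depending only on η, a₂, L and λ₁, such that: whenever u, v, ũ, ṽ : ℝ → H are differentiable and satisfy, for all t ≥ 0, u' = v, v' = −Λu − ηv − F(v) + w and ũ' = ṽ, ṽ' = −Λũ − ηṽ − F(ṽ) + w with the same forcing w : ℝ → H, one has for all t ≥ 0: ⟨Λ(u(t) − ũ(t)), u(t) − ũ(t)⟩ + ‖v(t) − ṽ(t)‖² ≤ C·e^{−ε₀ t}·(⟨Λ(u(0) − ũ(0)), u(0) − ũ(0)⟩ + ‖v(0) − ṽ(0)‖²). -/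
/-!
The forcing cancels in the difference `(p, q) = (u₁ - u₂, v₁ - v₂)`, which solves
`p' = q`, `q' = -Λ p - η q - (F v₁ - F v₂)`. The energy `E = ⟪Λ p, p⟫ + ‖q‖²` alone only
dissipates in `q`: damping and monotonicity give `E' ≤ -2 (η + a₂) ‖q‖²`. Adding the cross term
`2 ε ⟪p, q⟫` contributes `-2 ε ⟪Λ p, p⟫` to the derivative, at the price of terms that are
absorbed, for small `ε`, by Cauchy–Schwarz, coercivity and hypothesis (ii). For
`ε ≤ min (λ₁/2) (1/2)` the perturbed energy `V` lies between `E/2` and `3E/2`, so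
`V' ≤ -ε E ≤ -(2ε/3) V`, and Grönwall gives `E(t) ≤ 2 V(t) ≤ 2 e^{-2εt/3} V(0) ≤ 3 e^{-2εt/3} E(0)`.
-/

open scoped RealInnerProductSpace

open Real

theorem le_mul_exp_of_deriv_le_mul {f f' : ℝ → ℝ} {K t : ℝ}
    (hf : ∀ s, 0 ≤ s → HasDerivAt f (f' s) s) (hbound : ∀ s, 0 ≤ s → f' s ≤ K * f s)
    (ht : 0 ≤ t) : f t ≤ f 0 * exp (K * t) := by
  have hcont : ContinuousOn f (Set.Icc 0 t) := fun s hs =>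
    (hf s hs.1).continuousAt.continuousWithinAt
  have := le_gronwallBound_of_liminf_deriv_right_le hcont
    (fun s hs _ hr => (hf s hs.1).hasDerivWithinAt.liminf_right_slope_le hr) le_rfl
    (fun s hs => (hbound s hs.1).trans_eq (add_zero _).symm) t ⟨ht, le_rfl⟩
  rwa [gronwallBound_ε0, sub_zero] at this

namespace DampedWave

variable {H : Type*} [NormedAddCommGroup H] [InnerProductSpace ℝ H]
  {Λ : H →L[ℝ] H} {lam₁ ε η a₂ L : ℝ}

theorem sqrt_mul_norm_le_sqrt_inner (hΛ : ∀ x : H, lam₁ * ‖x‖ ^ 2 ≤ ⟪Λ x, x⟫) (x : H) :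
    √lam₁ * ‖x‖ ≤ √⟪Λ x, x⟫ := by
  rw [← sqrt_sq (norm_nonneg x), ← sqrt_mul' _ (sq_nonneg _)]
  exact sqrt_le_sqrt (hΛ x)

def energy (Λ : H →L[ℝ] H) (p q : H) : ℝ := ⟪Λ p, p⟫ + ‖q‖ ^ 2

def perturbedEnergy (Λ : H →L[ℝ] H) (ε : ℝ) (p q : H) : ℝ := energy Λ p q + 2 * ε * ⟪p, q⟫

theorem abs_perturbedEnergy_sub_energy_le (hΛ : ∀ x : H, lam₁ * ‖x‖ ^ 2 ≤ ⟪Λ x, x⟫)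
    (hε : 0 ≤ ε) (hε_lam : ε ≤ lam₁ / 2) (hε_half : ε ≤ 1 / 2) (p q : H) :
    |perturbedEnergy Λ ε p q - energy Λ p q| ≤ energy Λ p q / 2 := by
  have hpq := abs_real_inner_le_norm p q
  have hamgm : 2 * (‖p‖ * ‖q‖) ≤ ‖p‖ ^ 2 + ‖q‖ ^ 2 := by
    rw [← mul_assoc]; exact two_mul_le_add_sq _ _
  have hcoer := hΛ p
  rw [perturbedEnergy, add_sub_cancel_left, abs_mul, abs_of_nonneg (by positivity), energy]
  nlinarith [mul_le_mul_of_nonneg_right hε_lam (sq_nonneg ‖p‖),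
    mul_le_mul_of_nonneg_right hε_half (sq_nonneg ‖q‖)]

theorem hasDerivAt_perturbedEnergy (hΛ : (Λ : H →ₗ[ℝ] H).IsSymmetric) {P Q : ℝ → H}
    {p q : H} {t : ℝ} (hP : HasDerivAt P p t) (hQ : HasDerivAt Q q t) :
    HasDerivAt (fun s => perturbedEnergy Λ ε (P s) (Q s))
      (2 * ⟪Λ (P t), p⟫ + 2 * ⟪Q t, q⟫ + 2 * ε * (⟪P t, q⟫ + ⟪p, Q t⟫)) t := by
  have hΛP : HasDerivAt (fun s => Λ (P s)) (Λ p) t := Λ.hasFDerivAt.comp_hasDerivAt t hP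
  have := ((hΛP.inner ℝ hP).add hQ.norm_sq).add ((hP.inner ℝ hQ).const_mul (2 * ε))
  refine this.congr_deriv ?_
  rw [show ⟪Λ p, P t⟫ = ⟪Λ (P t), p⟫ from (hΛ p (P t)).trans (real_inner_comm _ _)]
  ring

theorem perturbedEnergy_deriv_le_neg_mul_energy (hΛ : ∀ x : H, lam₁ * ‖x‖ ^ 2 ≤ ⟪Λ x, x⟫)
    (hlam₁ : 0 < lam₁) (hε : 0 ≤ ε) (hε_rate : ε * ((|η| / √lam₁ + L) ^ 2 + 3) ≤ 2 * (η + a₂))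
    {p q d : H} (hd₁ : a₂ * ‖q‖ ^ 2 ≤ ⟪q, d⟫) (hd₂ : |⟪p, d⟫| ≤ L * √⟪Λ p, p⟫ * ‖q‖) :
    2 * ⟪Λ p, q⟫ + 2 * ⟪q, -Λ p - η • q - d⟫ + 2 * ε * (⟪p, -Λ p - η • q - d⟫ + ⟪q, q⟫)
      ≤ -ε * energy Λ p q := by
  set a := √⟪Λ p, p⟫
  set b := ‖q‖
  set K := |η| / √lam₁ + L
  have ha : a ^ 2 = ⟪Λ p, p⟫ := sq_sqrt ((by positivity : 0 ≤ lam₁ * ‖p‖ ^ 2).trans (hΛ p))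
  have hη_pq : |η * ⟪p, q⟫| ≤ |η| / √lam₁ * a * b := by
    have hp : ‖p‖ ≤ a / √lam₁ := by
      rw [le_div_iff₀' (sqrt_pos.2 hlam₁)]
      exact sqrt_mul_norm_le_sqrt_inner hΛ p
    calc |η * ⟪p, q⟫| ≤ |η| * (‖p‖ * b) := by
          rw [abs_mul]; gcongr; exact abs_real_inner_le_norm p q
      _ ≤ |η| * (a / √lam₁ * b) := by gcongr
      _ = |η| / √lam₁ * a * b := by ring
  have hcross : -(η * ⟪p, q⟫) - ⟪p, d⟫ ≤ K * a * b := by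
    linarith [neg_abs_le (η * ⟪p, q⟫), neg_abs_le ⟪p, d⟫]
  have hamgm : 2 * (K * a * b) ≤ a ^ 2 + K ^ 2 * b ^ 2 := by nlinarith [sq_nonneg (a - K * b)]
  have hexpand : 2 * ⟪Λ p, q⟫ + 2 * ⟪q, -Λ p - η • q - d⟫
      + 2 * ε * (⟪p, -Λ p - η • q - d⟫ + ⟪q, q⟫)
      = -2 * η * b ^ 2 - 2 * ⟪q, d⟫ + 2 * ε * (-a ^ 2 + (-(η * ⟪p, q⟫) - ⟪p, d⟫) + b ^ 2) := by
    simp only [inner_sub_right, inner_neg_right, real_inner_smul_right,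
      real_inner_self_eq_norm_sq, ha, real_inner_comm q (Λ p), real_inner_comm p (Λ p)]
    ring
  rw [hexpand, energy, ← ha]
  linarith [mul_le_mul_of_nonneg_left hcross hε, mul_le_mul_of_nonneg_left hamgm hε,
    mul_le_mul_of_nonneg_right hε_rate (sq_nonneg b)]

theorem energy_le_three_mul_exp_mul_energy (hΛsym : (Λ : H →ₗ[ℝ] H).IsSymmetric)
    (hΛ : ∀ x : H, lam₁ * ‖x‖ ^ 2 ≤ ⟪Λ x, x⟫) (hlam₁ : 0 < lam₁) (hε : 0 ≤ ε)
    (hε_lam : ε ≤ lam₁ / 2) (hε_half : ε ≤ 1 / 2)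
    (hε_rate : ε * ((|η| / √lam₁ + L) ^ 2 + 3) ≤ 2 * (η + a₂)) {P Q D : ℝ → H}
    (hP : ∀ s, 0 ≤ s → HasDerivAt P (Q s) s)
    (hQ : ∀ s, 0 ≤ s → HasDerivAt Q (-Λ (P s) - η • Q s - D s) s)
    (hD₁ : ∀ s, 0 ≤ s → a₂ * ‖Q s‖ ^ 2 ≤ ⟪Q s, D s⟫)
    (hD₂ : ∀ s, 0 ≤ s → |⟪P s, D s⟫| ≤ L * √⟪Λ (P s), P s⟫ * ‖Q s‖) {t : ℝ} (ht : 0 ≤ t) :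
    energy Λ (P t) (Q t) ≤ 3 * exp (-(2 * ε / 3) * t) * energy Λ (P 0) (Q 0) := by
  have hequiv := abs_perturbedEnergy_sub_energy_le hΛ hε hε_lam hε_half
  have hdecay : perturbedEnergy Λ ε (P t) (Q t) ≤
      perturbedEnergy Λ ε (P 0) (Q 0) * exp (-(2 * ε / 3) * t) := by
    refine le_mul_exp_of_deriv_le_mul
      (fun s hs => hasDerivAt_perturbedEnergy hΛsym (hP s hs) (hQ s hs)) (fun s hs => ?_) ht
    have hdiss :=
      perturbedEnergy_deriv_le_neg_mul_energy hΛ hlam₁ hε hε_rate (hD₁ s hs) (hD₂ s hs)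
    have hupper := (abs_le.1 (hequiv (P s) (Q s))).2
    linarith [mul_le_mul_of_nonneg_left hupper hε]
  have hlower_t := (abs_le.1 (hequiv (P t) (Q t))).1
  have hupper_0 := (abs_le.1 (hequiv (P 0) (Q 0))).2
  calc energy Λ (P t) (Q t) ≤ 2 * perturbedEnergy Λ ε (P t) (Q t) := by linarith
    _ ≤ 2 * (perturbedEnergy Λ ε (P 0) (Q 0) * exp (-(2 * ε / 3) * t)) := by linarith
    _ ≤ 2 * (3 / 2 * energy Λ (P 0) (Q 0) * exp (-(2 * ε / 3) * t)) := by
        gcongr; linarith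
    _ = 3 * exp (-(2 * ε / 3) * t) * energy Λ (P 0) (Q 0) := by ring

end DampedWave

theorem stmt6_general {H : Type*} [NormedAddCommGroup H] [InnerProductSpace ℝ H]
    (lam₁ : ℝ) (hlam₁ : 0 < lam₁)
    (Λ : H →L[ℝ] H) (hΛsym : ∀ x y : H, ⟪Λ x, y⟫ = ⟪x, Λ y⟫)
    (hΛcoer : ∀ x : H, lam₁ * ‖x‖ ^ 2 ≤ ⟪Λ x, x⟫)
    (η a₂ L : ℝ) (hηa : 0 < η + a₂)
    (F : H → H) (hF₁ : ∀ a b : H, a₂ * ‖a - b‖ ^ 2 ≤ ⟪a - b, F a - F b⟫)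
    (hF₂ : ∀ x a b : H, |⟪x, F a - F b⟫| ≤ L * Real.sqrt ⟪Λ x, x⟫ * ‖a - b‖) :
    ∃ ε₀ : ℝ, 0 < ε₀ ∧ ∃ C : ℝ, 1 ≤ C ∧
      ∀ w u₁ v₁ u₂ v₂ : ℝ → H,
        Differentiable ℝ u₁ → Differentiable ℝ v₁ →
        Differentiable ℝ u₂ → Differentiable ℝ v₂ →
        (∀ t : ℝ, 0 ≤ t → deriv u₁ t = v₁ t) →
        (∀ t : ℝ, 0 ≤ t → deriv v₁ t = -Λ (u₁ t) - η • v₁ t - F (v₁ t) + w t) →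
        (∀ t : ℝ, 0 ≤ t → deriv u₂ t = v₂ t) →
        (∀ t : ℝ, 0 ≤ t → deriv v₂ t = -Λ (u₂ t) - η • v₂ t - F (v₂ t) + w t) →
        ∀ t : ℝ, 0 ≤ t →
          ⟪Λ (u₁ t - u₂ t), u₁ t - u₂ t⟫ + ‖v₁ t - v₂ t‖ ^ 2 ≤
            C * Real.exp (-ε₀ * t) *
              (⟪Λ (u₁ 0 - u₂ 0), u₁ 0 - u₂ 0⟫ + ‖v₁ 0 - v₂ 0‖ ^ 2) := by
  set ε := min (2 * (η + a₂) / ((|η| / √lam₁ + L) ^ 2 + 3)) (min (lam₁ / 2) (1 / 2))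
  have hε : 0 < ε := lt_min (by positivity) (lt_min (by positivity) (by norm_num))
  have hε_rate : ε * ((|η| / √lam₁ + L) ^ 2 + 3) ≤ 2 * (η + a₂) :=
    (le_div_iff₀ (by positivity)).1 (min_le_left _ _)
  refine ⟨2 * ε / 3, by positivity, 3, by norm_num, ?_⟩
  intro w u₁ v₁ u₂ v₂ hu₁ hv₁ hu₂ hv₂ hu₁' hv₁' hu₂' hv₂' t ht
  have hP : ∀ s, 0 ≤ s → HasDerivAt (u₁ - u₂) (v₁ s - v₂ s) s := fun s hs => by
    simpa only [hu₁' s hs, hu₂' s hs] using (hu₁ s).hasDerivAt.sub (hu₂ s).hasDerivAt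
  have hQ : ∀ s, 0 ≤ s → HasDerivAt (v₁ - v₂)
      (-Λ (u₁ s - u₂ s) - η • (v₁ s - v₂ s) - (F (v₁ s) - F (v₂ s))) s := fun s hs => by
    convert (hv₁ s).hasDerivAt.sub (hv₂ s).hasDerivAt using 1
    rw [hv₁' s hs, hv₂' s hs, map_sub, smul_sub]
    abel
  exact DampedWave.energy_le_three_mul_exp_mul_energy (η := η) (L := L) hΛsym hΛcoer hlam₁ hε.le
    ((min_le_right _ _).trans (min_le_left _ _)) ((min_le_right _ _).trans (min_le_right _ _))
    hε_rate hP hQ (fun s _ => hF₁ (v₁ s) (v₂ s)) (fun s _ => hF₂ _ (v₁ s) (v₂ s)) ht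

theorem stmt6 {H : Type*} [NormedAddCommGroup H] [InnerProductSpace ℝ H]
    (lam₁ : ℝ) (hlam₁ : 0 < lam₁)
    (Λ : H →L[ℝ] H) (hΛsym : ∀ x y : H, ⟪Λ x, y⟫ = ⟪x, Λ y⟫)
    (hΛcoer : ∀ x : H, lam₁ * ‖x‖ ^ 2 ≤ ⟪Λ x, x⟫)
    (η a₂ L : ℝ) (hη : 0 < η) (hηa : 0 < η + a₂) (hL : 0 ≤ L)
    (F : H → H) (hF₁ : ∀ a b : H, a₂ * ‖a - b‖ ^ 2 ≤ ⟪a - b, F a - F b⟫)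
    (hF₂ : ∀ x a b : H, |⟪x, F a - F b⟫| ≤ L * Real.sqrt ⟪Λ x, x⟫ * ‖a - b‖) :
    ∃ ε₀ : ℝ, 0 < ε₀ ∧ ∃ C : ℝ, 1 ≤ C ∧
      ∀ w u₁ v₁ u₂ v₂ : ℝ → H,
        Differentiable ℝ u₁ → Differentiable ℝ v₁ →
        Differentiable ℝ u₂ → Differentiable ℝ v₂ →
        (∀ t : ℝ, 0 ≤ t → deriv u₁ t = v₁ t) →
        (∀ t : ℝ, 0 ≤ t → deriv v₁ t = -Λ (u₁ t) - η • v₁ t - F (v₁ t) + w t) →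
        (∀ t : ℝ, 0 ≤ t → deriv u₂ t = v₂ t) →
        (∀ t : ℝ, 0 ≤ t → deriv v₂ t = -Λ (u₂ t) - η • v₂ t - F (v₂ t) + w t) →
        ∀ t : ℝ, 0 ≤ t →
          ⟪Λ (u₁ t - u₂ t), u₁ t - u₂ t⟫ + ‖v₁ t - v₂ t‖ ^ 2 ≤
            C * Real.exp (-ε₀ * t) *
              (⟪Λ (u₁ 0 - u₂ 0), u₁ 0 - u₂ 0⟫ + ‖v₁ 0 - v₂ 0‖ ^ 2) :=
  stmt6_general lam₁ hlam₁ Λ hΛsym hΛcoer η a₂ L hηa F hF₁ hF₂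
end

section
/- Let H be a real inner product space, Λ : H → H a continuous linear self-adjoint operator with ⟨Λx, x⟩ ≥ 0 for all x, η ∈ ℝ, a₂ ∈ ℝ, τ > 0, and F : H → H satisfying ⟨a − b, F(a) − F(b)⟩ ≥ a₂‖a − b‖² for all a, b ∈ H. Suppose (u_n), (v_n), (ũ_n), (ṽ_n) are sequences in H satisfying, for all n, u_{n+1} = u_n + τ v_{n+1}, v_{n+1} = v_n − τ(Λu_{n+1} + η v_{n+1} + F(v_{n+1})) + w_n and ũ_{n+1} = ũ_n + τ ṽ_{n+1}, ṽ_{n+1} = ṽ_n − τ(Λũ_{n+1} + η ṽ_{n+1} + F(ṽ_{n+1})) + w_n, with the same sequence (w_n) in H. Writing ū_n = u_n − ũ_n and v̄_n = v_n − ṽ_n, one has for every n: ⟨Λū_{n+1}, ū_{n+1}⟩ + ‖v̄_{n+1}‖² + 2(η + a₂)·τ·‖v̄_{n+1}‖² ≤ ⟨Λū_n, ū_n⟩ + ‖v̄_n‖². -/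
open scoped RealInnerProductSpace

theorem stmt7 {H : Type*} [NormedAddCommGroup H] [InnerProductSpace ℝ H]
    (Λ : H →L[ℝ] H) (hΛsym : ∀ x y : H, ⟪Λ x, y⟫ = ⟪x, Λ y⟫)
    (hΛpos : ∀ x : H, 0 ≤ ⟪Λ x, x⟫)
    (η a₂ τ : ℝ) (hτ : 0 < τ)
    (F : H → H) (hF : ∀ a b : H, a₂ * ‖a - b‖ ^ 2 ≤ ⟪a - b, F a - F b⟫)
    (w u₁ v₁ u₂ v₂ : ℕ → H)
    (hu₁ : ∀ n : ℕ, u₁ (n + 1) = u₁ n + τ • v₁ (n + 1))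
    (hv₁ : ∀ n : ℕ, v₁ (n + 1) =
      v₁ n - τ • (Λ (u₁ (n + 1)) + η • v₁ (n + 1) + F (v₁ (n + 1))) + w n)
    (hu₂ : ∀ n : ℕ, u₂ (n + 1) = u₂ n + τ • v₂ (n + 1))
    (hv₂ : ∀ n : ℕ, v₂ (n + 1) =
      v₂ n - τ • (Λ (u₂ (n + 1)) + η • v₂ (n + 1) + F (v₂ (n + 1))) + w n)
    (n : ℕ) :
    ⟪Λ (u₁ (n + 1) - u₂ (n + 1)), u₁ (n + 1) - u₂ (n + 1)⟫ +
        ‖v₁ (n + 1) - v₂ (n + 1)‖ ^ 2 +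
        2 * (η + a₂) * τ * ‖v₁ (n + 1) - v₂ (n + 1)‖ ^ 2 ≤
      ⟪Λ (u₁ n - u₂ n), u₁ n - u₂ n⟫ + ‖v₁ n - v₂ n‖ ^ 2 := by
  set a := u₁ (n + 1) - u₂ (n + 1) with ha
  set b := u₁ n - u₂ n with hb
  set c := v₁ (n + 1) - v₂ (n + 1) with hc
  set d := v₁ n - v₂ n with hd
  set δ := F (v₁ (n + 1)) - F (v₂ (n + 1)) with hδ
  have hsub : a - b = τ • c := by
    rw [ha, hb, hc, hu₁ n, hu₂ n, smul_sub]; abel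
  have hsub2 : c - d = -(τ • (Λ a + η • c + δ)) := by
    rw [hc, hd, hδ, ha, map_sub]
    nth_rewrite 1 [hv₁ n]
    nth_rewrite 1 [hv₂ n]
    module
  have h1 : ⟪Λ b, a⟫ = ⟪Λ a, b⟫ := by rw [hΛsym, real_inner_comm]
  have eΛ : ⟪Λ a, a⟫ - ⟪Λ b, b⟫ + ⟪Λ (a - b), a - b⟫ = 2 * ⟪Λ a, a - b⟫ := by
    simp only [map_sub, inner_sub_left, inner_sub_right]
    linarith
  have en : ‖c‖ ^ 2 - ‖d‖ ^ 2 + ‖c - d‖ ^ 2 = 2 * ⟪c, c - d⟫ := by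
    have h2 : ‖c - d‖ ^ 2 = ‖c‖ ^ 2 - 2 * ⟪c, d⟫ + ‖d‖ ^ 2 := norm_sub_sq_real c d
    have h3 : ⟪c, c - d⟫ = ‖c‖ ^ 2 - ⟪c, d⟫ := by
      rw [inner_sub_right, real_inner_self_eq_norm_sq]
    linarith
  have r1 : ⟪Λ a, a - b⟫ = τ * ⟪c, Λ a⟫ := by
    rw [hsub, real_inner_smul_right, real_inner_comm]
  have r2 : ⟪c, c - d⟫ = -(τ * (⟪c, Λ a⟫ + η * ‖c‖ ^ 2 + ⟪c, δ⟫)) := by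
    rw [hsub2, inner_neg_right, real_inner_smul_right, inner_add_right,
      inner_add_right, real_inner_smul_right, real_inner_self_eq_norm_sq]
  have hpos := hΛpos (a - b)
  have hnn : (0:ℝ) ≤ ‖c - d‖ ^ 2 := sq_nonneg _
  have hF' : a₂ * ‖c‖ ^ 2 ≤ ⟪c, δ⟫ := hF (v₁ (n + 1)) (v₂ (n + 1))
  have hmul : τ * (a₂ * ‖c‖ ^ 2) ≤ τ * ⟪c, δ⟫ :=
    mul_le_mul_of_nonneg_left hF' hτ.le
  nlinarith [eΛ, en, r1, r2]
end

section
/- Let H be a real inner product space, λ₁ > 0, Λ : H → H a continuous linear self-adjoint operator with ⟨Λx, x⟩ ≥ λ₁‖x‖² for all x, η > 0, a₂ ∈ ℝ with η + a₂ > 0, L ≥ 0, and F : H → H satisfying (i) ⟨a − b, F(a) − F(b)⟩ ≥ a₂‖a − b‖² and (ii) |⟨x, F(a) − F(b)⟩| ≤ L·√(⟨Λx, x⟩)·‖a − b‖ for all x, a, b ∈ H. Then there exist ε₀ > 0 and C ≥ 1, depending only on η, a₂, L and λ₁, such that for every τ ∈ (0,1): whenever (u_n), (v_n), (ũ_n),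 (ṽ_n) are sequences in H satisfying, for all n, u_{n+1} = u_n + τ v_{n+1}, v_{n+1} = v_n − τ(Λu_{n+1} + η v_{n+1} + F(v_{n+1})) + w_n and ũ_{n+1} = ũ_n + τ ṽ_{n+1}, ṽ_{n+1} = ṽ_n − τ(Λũ_{n+1} + η ṽ_{n+1} + F(ṽ_{n+1})) + w_n with the same sequence (w_n) in H, one has for all n: ⟨Λ(u_n − ũ_n), u_n − ũ_n⟩ + ‖v_n − ṽ_n‖² ≤ C·e^{−ε₀ n τ}·(⟨Λ(u_0 − ũ_0), u_0 − ũ_0⟩ + ‖v_0 − ṽ_0‖²). -/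
open scoped RealInnerProductSpace
set_option maxHeartbeats 1000000

lemma step_aux {H : Type*} [NormedAddCommGroup H] [InnerProductSpace ℝ H]
    (lam₁ : ℝ) (hlam₁ : 0 < lam₁)
    (Λ : H →L[ℝ] H) (hΛsym : ∀ x y : H, ⟪Λ x, y⟫ = ⟪x, Λ y⟫)
    (hΛcoer : ∀ x : H, lam₁ * ‖x‖ ^ 2 ≤ ⟪Λ x, x⟫)
    (η a₂ L ε τ : ℝ) (hη : 0 < η) (hL : 0 ≤ L) (hμ : 0 < η + a₂)
    (hεpos : 0 < ε) (hεhalf : ε ≤ 1/2)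
    (hεK : 2*ε*(η^2/lam₁ + L^2 + 2) ≤ η + a₂)
    (hτ0 : 0 < τ) (hτ1 : τ < 1)
    (a p g : H)
    (hpg : a₂ * ‖p‖^2 ≤ ⟪p, g⟫)
    (hag : |⟪a, g⟫| ≤ L * Real.sqrt ⟪Λ a, a⟫ * ‖p‖) :
    ⟪Λ a, a⟫ + ‖p‖^2 + 2*ε*⟪a, p⟫ + ε*τ*(⟪Λ a, a⟫ + ‖p‖^2) ≤
      ⟪Λ (a - τ • p), a - τ • p⟫ + ‖p + τ • (Λ a + η • p + g)‖^2
        + 2*ε*⟪a - τ • p, p + τ • (Λ a + η • p + g)⟫ := by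
  set z : H := Λ a + η • p + g with hz
  have hsym : ⟪Λ p, a⟫ = ⟪Λ a, p⟫ := by rw [hΛsym p a, real_inner_comm]
  have hA0 : (0:ℝ) ≤ ⟪Λ a, a⟫ := le_trans (by positivity) (hΛcoer a)
  have hApp : (0:ℝ) ≤ ⟪Λ p, p⟫ := le_trans (by positivity) (hΛcoer p)
  have ha2 : lam₁ * ‖a‖^2 ≤ ⟪Λ a, a⟫ := hΛcoer a
  have h1 : ⟪Λ (a - τ • p), a - τ • p⟫
      = ⟪Λ a, a⟫ - 2*τ*⟪Λ a, p⟫ + τ^2*⟪Λ p, p⟫ := by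
    simp only [map_sub, map_smul, inner_sub_left, inner_sub_right,
      real_inner_smul_left, real_inner_smul_right, hsym]
    ring
  have h2 : ‖p + τ • z‖^2 = ‖p‖^2 + 2*τ*⟪p, z⟫ + τ^2*‖z‖^2 := by
    rw [norm_add_sq_real, real_inner_smul_right, norm_smul, Real.norm_eq_abs,
      abs_of_pos hτ0, mul_pow]
    ring
  have h3 : ⟪p, z⟫ = ⟪Λ a, p⟫ + η*‖p‖^2 + ⟪p, g⟫ := by
    rw [hz, inner_add_right, inner_add_right, real_inner_smul_right,
      real_inner_comm p (Λ a), real_inner_self_eq_norm_sq]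
  have h4 : ⟪a - τ • p, p + τ • z⟫
      = ⟪a, p⟫ + τ*⟪a, z⟫ - τ*‖p‖^2 - τ^2*⟪p, z⟫ := by
    simp only [inner_sub_left, inner_add_right, real_inner_smul_left,
      real_inner_smul_right, real_inner_self_eq_norm_sq]
    ring
  have h5 : ⟪a, z⟫ = ⟪Λ a, a⟫ + η*⟪a, p⟫ + ⟪a, g⟫ := by
    rw [hz, inner_add_right, inner_add_right, real_inner_smul_right,
      real_inner_comm a (Λ a)]
  have hcs_ap : |⟪a, p⟫| ≤ ‖a‖ * ‖p‖ := abs_real_inner_le_norm a p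
  have hyoung1 : η * (‖a‖ * ‖p‖) ≤ ⟪Λ a, a⟫/4 + η^2/lam₁ * ‖p‖^2 := by
    have keym : lam₁ * (η * (‖a‖ * ‖p‖)) ≤ lam₁ * (⟪Λ a, a⟫/4) + η^2 * ‖p‖^2 := by
      have hm := mul_le_mul_of_nonneg_left ha2 hlam₁.le
      linarith [sq_nonneg (lam₁*‖a‖ - 2*η*‖p‖), hm]
    have hid : lam₁ * (η^2/lam₁ * ‖p‖^2) = η^2 * ‖p‖^2 := by field_simp
    have h' : lam₁ * (η * (‖a‖ * ‖p‖)) ≤ lam₁ * (⟪Λ a, a⟫/4 + η^2/lam₁ * ‖p‖^2) := by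
      rw [mul_add, hid]; linarith
    exact le_of_mul_le_mul_left h' hlam₁
  have c1 : -(⟪Λ a, a⟫/4 + η^2/lam₁ * ‖p‖^2) ≤ η * ⟪a, p⟫ := by
    have h := abs_le.1 hcs_ap
    nlinarith [hyoung1, hη.le, h.1]
  have hsq : Real.sqrt ⟪Λ a, a⟫ ^ 2 = ⟪Λ a, a⟫ := Real.sq_sqrt hA0
  have c2 : -(⟪Λ a, a⟫/4 + L^2 * ‖p‖^2) ≤ ⟪a, g⟫ := by
    have h := abs_le.1 hag
    nlinarith [sq_nonneg (Real.sqrt ⟪Λ a, a⟫ - 2*L*‖p‖), hsq, h.1]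
  have c3 : 2*ε*τ^2*⟪p, z⟫ ≤ ε*τ*‖p‖^2 + τ^2*‖z‖^2/2 := by
    have hin : 2*ε*τ^2*⟪p, z⟫ ≤ 2*ε*τ^2*(‖p‖ * ‖z‖) :=
      mul_le_mul_of_nonneg_left (real_inner_le_norm p z) (by positivity)
    have h2et : 2*ε*τ ≤ 1 := by nlinarith
    nlinarith [sq_nonneg (τ*‖z‖ - 2*ε*τ*‖p‖), hin,
      mul_le_mul_of_nonneg_right h2et
        (mul_nonneg (mul_nonneg hεpos.le hτ0.le) (sq_nonneg ‖p‖))]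
  -- assembly
  have m1 : 2*ε*τ*(-(⟪Λ a, a⟫/4 + η^2/lam₁ * ‖p‖^2)) ≤ 2*ε*τ*(η * ⟪a, p⟫) :=
    mul_le_mul_of_nonneg_left c1 (by positivity)
  have m2 : 2*ε*τ*(-(⟪Λ a, a⟫/4 + L^2 * ‖p‖^2)) ≤ 2*ε*τ*⟪a, g⟫ :=
    mul_le_mul_of_nonneg_left c2 (by positivity)
  have m4 : 2*τ*(a₂ * ‖p‖^2) ≤ 2*τ*⟪p, g⟫ :=
    mul_le_mul_of_nonneg_left hpg (by positivity)
  have m5 : (0:ℝ) ≤ τ^2*⟪Λ p, p⟫ := mul_nonneg (sq_nonneg τ) hApp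
  have hcoef : (2*ε*(η^2/lam₁) + 2*ε*L^2 + 4*ε) * (τ * ‖p‖^2)
      ≤ (2*(η + a₂)) * (τ * ‖p‖^2) := by
    have hP : (0:ℝ) ≤ τ * ‖p‖^2 := by positivity
    have e1 := mul_le_mul_of_nonneg_right hεK hP
    have e2 : (0:ℝ) ≤ (η + a₂) * (τ * ‖p‖^2) := mul_nonneg hμ.le hP
    nlinarith [e1, e2]
  rw [h1, h2, h4, h5]
  have m6 : (0:ℝ) ≤ τ^2*‖z‖^2 := by positivity
  have m7 : (0:ℝ) ≤ ε*τ*⟪Λ a, a⟫ := mul_nonneg (by positivity) hA0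
  have m8 : 2*τ*⟪p, z⟫ = 2*τ*(⟪Λ a, p⟫ + η*‖p‖^2 + ⟪p, g⟫) := by rw [h3]
  linarith [m1, m2, c3, m4, m5, m6, m7, hcoef, m8]

lemma exp_half_le_aux (x : ℝ) (h0 : 0 ≤ x) (h1 : x ≤ 1) : Real.exp (x / 2) ≤ 1 + x := by
  have he : 1 - x / 2 ≤ Real.exp (-(x / 2)) := by
    have := Real.add_one_le_exp (-(x / 2)); linarith
  have hp : (0:ℝ) < 1 - x / 2 := by linarith
  have hq : (0:ℝ) < Real.exp (x / 2) := Real.exp_pos _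
  have key : Real.exp (x / 2) * (1 - x / 2) ≤ 1 := by
    have h2 : Real.exp (x / 2) * (1 - x / 2) ≤ Real.exp (x / 2) * Real.exp (-(x / 2)) :=
      mul_le_mul_of_nonneg_left he hq.le
    rw [← Real.exp_add] at h2; simpa using h2
  nlinarith [key, hp, hq, sq_nonneg x]


theorem stmt8 {H : Type*} [NormedAddCommGroup H] [InnerProductSpace ℝ H]
    (lam₁ : ℝ) (hlam₁ : 0 < lam₁)
    (Λ : H →L[ℝ] H) (hΛsym : ∀ x y : H, ⟪Λ x, y⟫ = ⟪x, Λ y⟫)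
    (hΛcoer : ∀ x : H, lam₁ * ‖x‖ ^ 2 ≤ ⟪Λ x, x⟫)
    (η a₂ L : ℝ) (hη : 0 < η) (hηa : 0 < η + a₂) (hL : 0 ≤ L)
    (F : H → H) (hF₁ : ∀ a b : H, a₂ * ‖a - b‖ ^ 2 ≤ ⟪a - b, F a - F b⟫)
    (hF₂ : ∀ x a b : H, |⟪x, F a - F b⟫| ≤ L * Real.sqrt ⟪Λ x, x⟫ * ‖a - b‖) :
    ∃ ε₀ : ℝ, 0 < ε₀ ∧ ∃ C : ℝ, 1 ≤ C ∧
      ∀ τ : ℝ, 0 < τ → τ < 1 →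
        ∀ w u₁ v₁ u₂ v₂ : ℕ → H,
          (∀ n : ℕ, u₁ (n + 1) = u₁ n + τ • v₁ (n + 1)) →
          (∀ n : ℕ, v₁ (n + 1) =
            v₁ n - τ • (Λ (u₁ (n + 1)) + η • v₁ (n + 1) + F (v₁ (n + 1))) + w n) →
          (∀ n : ℕ, u₂ (n + 1) = u₂ n + τ • v₂ (n + 1)) →
          (∀ n : ℕ, v₂ (n + 1) =
            v₂ n - τ • (Λ (u₂ (n + 1)) + η • v₂ (n + 1) + F (v₂ (n + 1))) + w n) →
          ∀ n : ℕ,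
            ⟪Λ (u₁ n - u₂ n), u₁ n - u₂ n⟫ + ‖v₁ n - v₂ n‖ ^ 2 ≤
              C * Real.exp (-ε₀ * (n * τ)) *
                (⟪Λ (u₁ 0 - u₂ 0), u₁ 0 - u₂ 0⟫ + ‖v₁ 0 - v₂ 0‖ ^ 2) := by
  have hKpos : (0:ℝ) < η^2/lam₁ + L^2 + 2 := by positivity
  obtain ⟨ε, hεdef⟩ : ∃ e : ℝ,
      e = min ((η+a₂)/(2*(η^2/lam₁+L^2+2))) (min (1/2) (lam₁/2)) := ⟨_, rfl⟩
  have hεpos : 0 < ε := by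
    rw [hεdef]
    exact lt_min (div_pos hηa (by positivity)) (lt_min (by norm_num) (by positivity))
  have hεhalf : ε ≤ 1/2 := by
    rw [hεdef]; exact le_trans (min_le_right _ _) (min_le_left _ _)
  have hεlam : ε ≤ lam₁/2 := by
    rw [hεdef]; exact le_trans (min_le_right _ _) (min_le_right _ _)
  have hεK : 2*ε*(η^2/lam₁ + L^2 + 2) ≤ η + a₂ := by
    have hle : ε ≤ (η+a₂)/(2*(η^2/lam₁+L^2+2)) := hεdef ▸ min_le_left _ _
    have h := mul_le_mul_of_nonneg_right hle
      (by positivity : (0:ℝ) ≤ 2*(η^2/lam₁+L^2+2))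
    calc 2*ε*(η^2/lam₁ + L^2 + 2) = ε*(2*(η^2/lam₁ + L^2 + 2)) := by ring
      _ ≤ ((η+a₂)/(2*(η^2/lam₁+L^2+2)))*(2*(η^2/lam₁+L^2+2)) := h
      _ = η + a₂ := by field_simp
  have hcomp : ∀ x y : H, |2*ε*⟪x, y⟫| ≤ (⟪Λ x, x⟫ + ‖y‖^2)/2 := by
    intro x y
    have h1 : |⟪x, y⟫| ≤ ‖x‖*‖y‖ := abs_real_inner_le_norm x y
    have h2 := hΛcoer x
    rw [abs_mul, abs_of_pos (by positivity : (0:ℝ) < 2*ε)]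
    nlinarith [mul_le_mul_of_nonneg_left h1 (by positivity : (0:ℝ) ≤ 2*ε),
      mul_nonneg hεpos.le (sq_nonneg (‖x‖ - ‖y‖)),
      mul_le_mul_of_nonneg_right hεlam (sq_nonneg ‖x‖),
      mul_le_mul_of_nonneg_right hεhalf (sq_nonneg ‖y‖)]
  refine ⟨ε/3, by positivity, 3, by norm_num, ?_⟩
  intro τ hτ0 hτ1 w u₁ v₁ u₂ v₂ hu₁ hv₁ hu₂ hv₂
  have hrel_e : ∀ n, u₁ n - u₂ n
      = (u₁ (n+1) - u₂ (n+1)) - τ • (v₁ (n+1) - v₂ (n+1)) := by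
    intro n
    have y1 : u₁ (n+1) - (u₁ n + τ • v₁ (n+1)) = 0 := sub_eq_zero_of_eq (hu₁ n)
    have y2 : u₂ (n+1) - (u₂ n + τ • v₂ (n+1)) = 0 := sub_eq_zero_of_eq (hu₂ n)
    have key : (u₁ n - u₂ n) - ((u₁ (n+1) - u₂ (n+1)) - τ • (v₁ (n+1) - v₂ (n+1)))
        = -(u₁ (n+1) - (u₁ n + τ • v₁ (n+1))) + (u₂ (n+1) - (u₂ n + τ • v₂ (n+1))) := by
      module
    rw [y1, y2] at key
    simp only [neg_zero, add_zero] at key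
    exact sub_eq_zero.mp key
  have hrel_f : ∀ n, v₁ n - v₂ n
      = (v₁ (n+1) - v₂ (n+1)) + τ • (Λ (u₁ (n+1) - u₂ (n+1))
          + η • (v₁ (n+1) - v₂ (n+1)) + (F (v₁ (n+1)) - F (v₂ (n+1)))) := by
    intro n
    have y1 : v₁ (n+1) - (v₁ n - τ • (Λ (u₁ (n+1)) + η • v₁ (n+1) + F (v₁ (n+1))) + w n)
        = 0 := sub_eq_zero_of_eq (hv₁ n)
    have y2 : v₂ (n+1) - (v₂ n - τ • (Λ (u₂ (n+1)) + η • v₂ (n+1) + F (v₂ (n+1))) + w n)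
        = 0 := sub_eq_zero_of_eq (hv₂ n)
    have key : (v₁ n - v₂ n) - ((v₁ (n+1) - v₂ (n+1)) + τ • (Λ (u₁ (n+1) - u₂ (n+1))
          + η • (v₁ (n+1) - v₂ (n+1)) + (F (v₁ (n+1)) - F (v₂ (n+1)))))
        = -(v₁ (n+1) - (v₁ n - τ • (Λ (u₁ (n+1)) + η • v₁ (n+1) + F (v₁ (n+1))) + w n))
          + (v₂ (n+1) - (v₂ n - τ • (Λ (u₂ (n+1)) + η • v₂ (n+1) + F (v₂ (n+1))) + w n)) := by
      rw [map_sub]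
      module
    rw [y1, y2] at key
    simp only [neg_zero, add_zero] at key
    exact sub_eq_zero.mp key
  obtain ⟨En, hEn⟩ : ∃ E : ℕ → ℝ,
      ∀ m, E m = ⟪Λ (u₁ m - u₂ m), u₁ m - u₂ m⟫ + ‖v₁ m - v₂ m‖^2 :=
    ⟨_, fun m => rfl⟩
  obtain ⟨Vn, hVn⟩ : ∃ V : ℕ → ℝ,
      ∀ m, V m = En m + 2*ε*⟪u₁ m - u₂ m, v₁ m - v₂ m⟫ :=
    ⟨_, fun m => rfl⟩
  have hEnn : ∀ m, 0 ≤ En m := by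
    intro m
    rw [hEn m]
    have := hΛcoer (u₁ m - u₂ m)
    nlinarith [sq_nonneg ‖u₁ m - u₂ m‖, sq_nonneg ‖v₁ m - v₂ m‖]
  have hstepV : ∀ n, Vn (n+1) * (1 + 2*ε*τ/3) ≤ Vn n := by
    intro n
    have h := step_aux lam₁ hlam₁ Λ hΛsym hΛcoer η a₂ L ε τ hη hL hηa hεpos hεhalf
      hεK hτ0 hτ1 (u₁ (n+1) - u₂ (n+1)) (v₁ (n+1) - v₂ (n+1))
      (F (v₁ (n+1)) - F (v₂ (n+1)))
      (hF₁ (v₁ (n+1)) (v₂ (n+1)))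
      (hF₂ (u₁ (n+1) - u₂ (n+1)) (v₁ (n+1)) (v₂ (n+1)))
    rw [← hrel_e n, ← hrel_f n] at h
    have hc := abs_le.1 (hcomp (u₁ (n+1) - u₂ (n+1)) (v₁ (n+1) - v₂ (n+1)))
    rw [hVn (n+1), hVn n, hEn (n+1), hEn n]
    linarith [h, mul_le_mul_of_nonneg_left hc.2 (by positivity : (0:ℝ) ≤ 2*ε*τ/3)]
  have hpow : ∀ n, Vn n * (1 + 2*ε*τ/3)^n ≤ Vn 0 := by
    intro n
    induction n with
    | zero => simp
    | succ n ih =>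
      have hr1 : (0:ℝ) ≤ (1 + 2*ε*τ/3)^n := by positivity
      calc Vn (n+1) * (1 + 2*ε*τ/3)^(n+1)
          = (Vn (n+1) * (1 + 2*ε*τ/3)) * (1 + 2*ε*τ/3)^n := by ring
        _ ≤ Vn n * (1 + 2*ε*τ/3)^n := mul_le_mul_of_nonneg_right (hstepV n) hr1
        _ ≤ Vn 0 := ih
  intro n
  have hc_n := abs_le.1 (hcomp (u₁ n - u₂ n) (v₁ n - v₂ n))
  have hc_0 := abs_le.1 (hcomp (u₁ 0 - u₂ 0) (v₁ 0 - v₂ 0))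
  have hVlow : En n / 2 ≤ Vn n := by
    rw [hVn n]; linarith [hc_n.1, hEn n, le_of_eq (hEn n)]
  have hVhigh : Vn 0 ≤ 3/2 * En 0 := by
    rw [hVn 0]; linarith [hc_0.2, hEn 0]
  have hrge : (0:ℝ) ≤ (1 + 2*ε*τ/3)^n := by positivity
  have hchain : En n * (1 + 2*ε*τ/3)^n ≤ 3 * En 0 := by
    have h1 : En n * (1 + 2*ε*τ/3)^n ≤ (2 * Vn n) * (1 + 2*ε*τ/3)^n :=
      mul_le_mul_of_nonneg_right (by linarith) hrge
    have h2 : (2 * Vn n) * (1 + 2*ε*τ/3)^n = 2 * (Vn n * (1 + 2*ε*τ/3)^n) := by ring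
    have h3 := hpow n
    linarith
  have hexp1 : Real.exp ((ε/3)*τ) ≤ 1 + 2*ε*τ/3 := by
    have h0 : (0:ℝ) ≤ 2*ε*τ/3 := by positivity
    have h1 : 2*ε*τ/3 ≤ 1 := by nlinarith
    have h := exp_half_le_aux (2*ε*τ/3) h0 h1
    rw [show (2*ε*τ/3)/2 = (ε/3)*τ by ring] at h
    exact h
  have hexp2 : Real.exp ((ε/3)*((n:ℝ)*τ)) ≤ (1 + 2*ε*τ/3)^n := by
    rw [show (ε/3)*((n:ℝ)*τ) = (n:ℝ) * ((ε/3)*τ) by ring, Real.exp_nat_mul]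
    exact pow_le_pow_left₀ (Real.exp_pos _).le hexp1 n
  have hfin : En n * Real.exp ((ε/3)*((n:ℝ)*τ)) ≤ 3 * En 0 :=
    le_trans (mul_le_mul_of_nonneg_left hexp2 (hEnn n)) hchain
  have hgoal : En n ≤ 3 * Real.exp (-(ε/3) * ((n:ℝ)*τ)) * En 0 := by
    rw [show -(ε/3) * ((n:ℝ)*τ) = -((ε/3) * ((n:ℝ)*τ)) by ring, Real.exp_neg]
    have hpos := Real.exp_pos ((ε/3)*((n:ℝ)*τ))
    have h1 : En n ≤ 3 * En 0 / Real.exp ((ε/3)*((n:ℝ)*τ)) := (le_div_iff₀ hpos).2 hfin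
    have h2 : 3 * En 0 / Real.exp ((ε/3)*((n:ℝ)*τ))
        = 3 * (Real.exp ((ε/3)*((n:ℝ)*τ)))⁻¹ * En 0 := by
      rw [div_eq_mul_inv]; ring
    linarith
  rw [hEn n, hEn 0] at hgoal
  exact hgoal
end

section
/- Let (𝒪, 𝔄, μ) be a measure space, C ≥ 0, and let f : ℝ → ℝ be differentiable with |deriv f ξ| ≤ C(1 + |ξ|) for all ξ ∈ ℝ. Let v₁, v₂ : 𝒪 → ℝ be measurable functions in L²(μ), and suppose M₁, M₂ ≥ 0 satisfy |v₁| ≤ M₁ and |v₂| ≤ M₂ μ-almost everywhere. Then f ∘ v₁ − f ∘ v₂ ∈ L²(μ) and ‖f ∘ v₁ − f ∘ v₂‖_{L²(μ)} ≤ C·(1 + M₁ + M₂)·‖v₁ − v₂‖_{L²(μ)}. -/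
open MeasureTheory

theorem norm_sub_le_of_norm_deriv_le_linear {E : Type*} [NormedAddCommGroup E] [NormedSpace ℝ E]
    {f : ℝ → E} {C : ℝ} (hC : 0 ≤ C) (hf : Differentiable ℝ f)
    (hf' : ∀ ξ, ‖deriv f ξ‖ ≤ C * (1 + |ξ|)) (a b : ℝ) :
    ‖f a - f b‖ ≤ C * (1 + max |a| |b|) * |a - b| := by
  have hbound : ∀ ξ ∈ Set.uIcc b a, ‖deriv f ξ‖ ≤ C * (1 + max |a| |b|) := by
    intro ξ hξ
    have hξ : |ξ| ≤ max |a| |b| := by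
      rcases Set.mem_uIcc.1 hξ with ⟨hbξ, hξa⟩ | ⟨haξ, hξb⟩
      · exact (abs_le_max_abs_abs hbξ hξa).trans_eq (max_comm _ _)
      · exact abs_le_max_abs_abs haξ hξb
    calc ‖deriv f ξ‖ ≤ C * (1 + |ξ|) := hf' ξ
      _ ≤ C * (1 + max |a| |b|) := by gcongr
  simpa only [Real.norm_eq_abs] using (convex_uIcc b a).norm_image_sub_le_of_norm_deriv_le
    (fun ξ _ => hf ξ) hbound Set.left_mem_uIcc Set.right_mem_uIcc

theorem stmt16_general {𝒪 : Type*} [MeasurableSpace 𝒪] (μ : Measure 𝒪)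
    (C : ℝ) (hC : 0 ≤ C) (f : ℝ → ℝ) (hf : Differentiable ℝ f)
    (hf' : ∀ ξ : ℝ, |deriv f ξ| ≤ C * (1 + |ξ|))
    (v₁ v₂ : 𝒪 → ℝ)
    (hv₁ : MemLp v₁ 2 μ) (hv₂ : MemLp v₂ 2 μ)
    (M₁ M₂ : ℝ)
    (hb₁ : ∀ᵐ x ∂μ, |v₁ x| ≤ M₁) (hb₂ : ∀ᵐ x ∂μ, |v₂ x| ≤ M₂) :
    MemLp (fun x => f (v₁ x) - f (v₂ x)) 2 μ ∧
      eLpNorm (fun x => f (v₁ x) - f (v₂ x)) 2 μ ≤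
        ENNReal.ofReal (C * (1 + M₁ + M₂)) *
          eLpNorm (fun x => v₁ x - v₂ x) 2 μ := by
  have hlip : ∀ᵐ x ∂μ, ‖f (v₁ x) - f (v₂ x)‖ ≤ C * (1 + M₁ + M₂) * ‖v₁ x - v₂ x‖ := by
    filter_upwards [hb₁, hb₂] with x h₁ h₂
    refine (norm_sub_le_of_norm_deriv_le_linear hC hf hf' _ _).trans ?_
    have hmax : max |v₁ x| |v₂ x| ≤ M₁ + M₂ :=
      max_le (by linarith [abs_nonneg (v₂ x)]) (by linarith [abs_nonneg (v₁ x)])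
    rw [Real.norm_eq_abs, add_assoc]
    gcongr
  have hmeas : AEStronglyMeasurable (fun x => f (v₁ x) - f (v₂ x)) μ :=
    (hf.continuous.comp_aestronglyMeasurable hv₁.1).sub
      (hf.continuous.comp_aestronglyMeasurable hv₂.1)
  exact ⟨(hv₁.sub hv₂).of_le_mul hmeas hlip, eLpNorm_le_mul_eLpNorm_of_ae_le_mul hlip 2⟩

theorem stmt16 {𝒪 : Type*} [MeasurableSpace 𝒪] (μ : Measure 𝒪)
    (C : ℝ) (hC : 0 ≤ C) (f : ℝ → ℝ) (hf : Differentiable ℝ f)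
    (hf' : ∀ ξ : ℝ, |deriv f ξ| ≤ C * (1 + |ξ|))
    (v₁ v₂ : 𝒪 → ℝ) (hv₁m : Measurable v₁) (hv₂m : Measurable v₂)
    (hv₁ : MemLp v₁ 2 μ) (hv₂ : MemLp v₂ 2 μ)
    (M₁ M₂ : ℝ) (hM₁ : 0 ≤ M₁) (hM₂ : 0 ≤ M₂)
    (hb₁ : ∀ᵐ x ∂μ, |v₁ x| ≤ M₁) (hb₂ : ∀ᵐ x ∂μ, |v₂ x| ≤ M₂) :
    MemLp (fun x => f (v₁ x) - f (v₂ x)) 2 μ ∧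
      eLpNorm (fun x => f (v₁ x) - f (v₂ x)) 2 μ ≤
        ENNReal.ofReal (C * (1 + M₁ + M₂)) *
          eLpNorm (fun x => v₁ x - v₂ x) 2 μ :=
  stmt16_general μ C hC f hf hf' v₁ v₂ hv₁ hv₂ M₁ M₂ hb₁ hb₂
end
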